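/- Let φ, ψ be LTL formulas in negation normal form, α a finite conjunction of literals, and S a finite set of literals. If α ∧ X ψ ∈ DNF(φ) and S ⊨_f ψ, then S ∪ CF(α) ⊨_f φ. -/

import Mathlib

namespace DNFLTL

/-- Literals: atomic propositions or their negations. -/
inductive Lit (AP : Type) : Type
  | pos : AP → Lit AP
  | neg : AP → Lit AP
deriving DecidableEq

/-- LTL formulas in negation normal form:
`True | a | ¬a | φ∧φ | φ∨φ | φ U φ | φ R φ | X φ`. -/
inductive LTL (AP : Type) : Type
  | tt    : LTL AP
  | atom  : AP → LTL AP
  | natom : AP → LTL AP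
  | and   : LTL AP → LTL AP → LTL AP
  | or    : LTL AP → LTL AP → LTL AP
  | untl  : LTL AP → LTL AP → LTL AP
  | rel   : LTL AP → LTL AP → LTL AP
  | next  : LTL AP → LTL AP
deriving DecidableEq

variable {AP : Type}

/-- The suffix `ξ_i` of an infinite word. -/
def suff (ξ : ℕ → Set AP) (i : ℕ) : ℕ → Set AP := fun n => ξ (n + i)

/-- Standard LTL satisfaction `ξ ⊨ φ`. -/
def Sat : (ℕ → Set AP) → LTL AP → Prop
  | _, .tt => True
  | ξ, .atom a => a ∈ ξ 0
  | ξ, .natom a => a ∉ ξ 0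
  | ξ, .and φ ψ => Sat ξ φ ∧ Sat ξ ψ
  | ξ, .or φ ψ => Sat ξ φ ∨ Sat ξ ψ
  | ξ, .untl φ ψ => ∃ i, Sat (suff ξ i) ψ ∧ ∀ j < i, Sat (suff ξ j) φ
  | ξ, .rel φ ψ => (∀ i, Sat (suff ξ i) ψ) ∨
      ∃ i, Sat (suff ξ i) φ ∧ Sat (suff ξ i) ψ ∧ ∀ j < i, Sat (suff ξ j) ψ
  | ξ, .next φ => Sat (suff ξ 1) φ

/-- A letter `ω ∈ 2^AP` satisfies a literal. -/
def SatLit (ω : Set AP) : Lit AP → Prop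
  | .pos a => a ∈ ω
  | .neg a => a ∉ ω

/-- A letter satisfies a finite conjunction of literals (represented as its set of literals). -/
def SatConj (ω : Set AP) (α : Set (Lit AP)) : Prop := ∀ l ∈ α, SatLit ω l

/-- `DNF φ`: the set of clauses `α ∧ X ψ` of the disjunctive normal form of `φ`.
A clause is a pair `(α, ψ)` where `α` is a finite conjunction of literals,
represented as its set `CF(α)` of literals. -/
def DNF : LTL AP → Set (Set (Lit AP) × LTL AP)
  | .tt => {(∅, .tt)}
  | .atom a => {({Lit.pos a}, .tt)}
  | .natom a => {({Lit.neg a}, .tt)}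
  | .next φ => {(∅, φ)}
  | .or φ ψ => DNF φ ∪ DNF ψ
  | .and φ ψ => {c | ∃ c1 ∈ DNF φ, ∃ c2 ∈ DNF ψ, c = (c1.1 ∪ c2.1, .and c1.2 c2.2)}
  | .untl φ ψ => DNF ψ ∪ {c | ∃ c1 ∈ DNF φ, c = (c1.1, .and c1.2 (.untl φ ψ))}
  | .rel φ ψ =>
      {c | ∃ c1 ∈ DNF φ, ∃ c2 ∈ DNF ψ, c = (c1.1 ∪ c2.1, .and c1.2 c2.2)} ∪
      {c | ∃ c2 ∈ DNF ψ, c = (c2.1, .and c2.2 (.rel φ ψ))}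

/-- `φ →ω ψ`: transition on a letter. -/
def StepW (φ : LTL AP) (ω : Set AP) (ψ : LTL AP) : Prop :=
  ∃ α, (α, ψ) ∈ DNF φ ∧ SatConj ω α

/-- `φ →η ψ`: expansion along a finite word. -/
def StepWord : LTL AP → List (Set AP) → LTL AP → Prop
  | φ, [], ψ => φ = ψ
  | φ, ω :: η, ψ => ∃ χ, StepW φ ω χ ∧ StepWord χ η ψ

/-- `φ →α ψ` for some label `α`: a single expansion step. -/
def Expand (φ ψ : LTL AP) : Prop := ∃ α, (α, ψ) ∈ DNF φ

/-- `EF φ`: all formulas expandable from `φ`, together with `φ` itself. -/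
def EF (φ : LTL AP) : Set (LTL AP) := {ψ | Relation.ReflTransGen Expand φ ψ}

/-- `φ ↪ ψ`: expandable by a nonempty chain. -/
def ExpandPlus (φ ψ : LTL AP) : Prop := Relation.TransGen Expand φ ψ

/-- The prefix `ξ^n` of an infinite word (first `n` letters). -/
def pref (ξ : ℕ → Set AP) (n : ℕ) : List (Set AP) := (List.range n).map ξ

/-- The finite segment `ξ(a) ξ(a+1) … ξ(b-1)` of an infinite word. -/
def seg (ξ : ℕ → Set AP) (a b : ℕ) : List (Set AP) :=
  (List.range (b - a)).map (fun j => ξ (a + j))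

/-- `φ →ξ φ` for an infinite word `ξ`: `ξ` can be partitioned into finite nonempty
words `η0 η1 η2 …` (given by strictly monotone cut points) with `φ →ηi φ` for all `i`. -/
def LoopOn (φ : LTL AP) (ξ : ℕ → Set AP) : Prop :=
  ∃ k : ℕ → ℕ, k 0 = 0 ∧ StrictMono k ∧ ∀ i, StepWord φ (seg ξ (k i) (k (i + 1))) φ

/-- `CF φ`: the conjuncts of `φ`, with `CF True = ∅`. -/
def CF : LTL AP → Set (LTL AP)
  | .tt => ∅
  | .and φ ψ => CF φ ∪ CF ψ
  | φ => {φ}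

/-- `S ⊨_f φ` for a set of literals `S`. -/
def SatF (S : Set (Lit AP)) : LTL AP → Prop
  | .tt => True
  | .atom a => Lit.pos a ∈ S
  | .natom a => Lit.neg a ∈ S
  | .and φ ψ => SatF S φ ∧ SatF S ψ
  | .or φ ψ => SatF S φ ∨ SatF S ψ
  | .untl _ ψ => SatF S ψ
  | .rel _ ψ => SatF S ψ
  | .next ψ => SatF S ψ

/-- A labelled expansion chain `φ = φ0 →α0 φ1 →α1 … →αn φ(n+1) = χ` along the
finite word `η = ω0…ωn` with `ωi ⊨ αi`, accumulating `S = ⋃ CF(αj)`. -/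
inductive LChain : LTL AP → List (Set AP) → Set (Lit AP) → LTL AP → Prop
  | nil (φ : LTL AP) : LChain φ [] ∅ φ
  | cons {φ ψ χ : LTL AP} {η : List (Set AP)} {S α : Set (Lit AP)} {ω : Set AP} :
      (α, ψ) ∈ DNF φ → SatConj ω α → LChain ψ η S χ → LChain φ (ω :: η) (α ∪ S) χ

/-- `η ⊨_f φ` for a finite word `η`. -/
def SatWF (η : List (Set AP)) (φ : LTL AP) : Prop :=
  ∃ S χ, LChain φ η S χ ∧ SatF S φ

/-- The obligation set `OS φ`. -/
def OS : LTL AP → Set (Set (Lit AP))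
  | .tt => {∅}
  | .atom a => {{Lit.pos a}}
  | .natom a => {{Lit.neg a}}
  | .next ψ => OS ψ
  | .or φ ψ => OS φ ∪ OS ψ
  | .and φ ψ => {S | ∃ S1 ∈ OS φ, ∃ S2 ∈ OS ψ, S = S1 ∪ S2}
  | .untl _ ψ => OS ψ
  | .rel _ ψ => OS ψ

/-- The subformulas of a formula. -/
def subf [DecidableEq AP] : LTL AP → Finset (LTL AP)
  | .tt => {.tt}
  | .atom a => {.atom a}
  | .natom a => {.natom a}
  | .and φ ψ => insert (.and φ ψ) (subf φ ∪ subf ψ)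
  | .or φ ψ => insert (.or φ ψ) (subf φ ∪ subf ψ)
  | .untl φ ψ => insert (.untl φ ψ) (subf φ ∪ subf ψ)
  | .rel φ ψ => insert (.rel φ ψ) (subf φ ∪ subf ψ)
  | .next φ => insert (.next φ) (subf φ)

/-- `cl φ`: the subformulas of `φ` together with `True`. -/
def cl [DecidableEq AP] (φ : LTL AP) : Finset (LTL AP) := insert .tt (subf φ)

/-- The atomic propositions appearing in a formula. -/
def atoms [DecidableEq AP] : LTL AP → Finset AP
  | .tt => ∅
  | .atom a => {a}
  | .natom a => {a}
  | .and φ ψ => atoms φ ∪ atoms ψ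
  | .or φ ψ => atoms φ ∪ atoms ψ
  | .untl φ ψ => atoms φ ∪ atoms ψ
  | .rel φ ψ => atoms φ ∪ atoms ψ
  | .next φ => atoms φ

/-- No subformula has `R` as root operator. -/
def ReleaseFree : LTL AP → Prop
  | .tt => True
  | .atom _ => True
  | .natom _ => True
  | .and φ ψ => ReleaseFree φ ∧ ReleaseFree ψ
  | .or φ ψ => ReleaseFree φ ∧ ReleaseFree ψ
  | .untl φ ψ => ReleaseFree φ ∧ ReleaseFree ψ
  | .rel _ _ => False
  | .next φ => ReleaseFree φ

/-- No subformula has `U` as root operator. -/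
def UntilFree : LTL AP → Prop
  | .tt => True
  | .atom _ => True
  | .natom _ => True
  | .and φ ψ => UntilFree φ ∧ UntilFree ψ
  | .or φ ψ => UntilFree φ ∧ UntilFree ψ
  | .untl _ _ => False
  | .rel φ ψ => UntilFree φ ∧ UntilFree ψ
  | .next φ => UntilFree φ

/-- The root operator is Until or Release. -/
def isUntilOrRelease : LTL AP → Prop
  | .untl _ _ => True
  | .rel _ _ => True
  | _ => False

/-! Induction on `φ`. The clauses that unfold `φ₁ U φ₂` or `φ₁ R φ₂` keep that formula as a
conjunct of their next part, so there `S ⊨_f ψ` already gives `S ⊨_f φ`; for an atom or a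
negated atom, `α` is the literal itself. -/

theorem SatF.mono {S T : Set (Lit AP)} (hST : S ⊆ T) : ∀ {φ : LTL AP}, SatF S φ → SatF T φ
  | .tt, _ => trivial
  | .atom _, h => hST h
  | .natom _, h => hST h
  | .and _ _, h => ⟨h.1.mono hST, h.2.mono hST⟩
  | .or _ _, h => h.imp (·.mono hST) (·.mono hST)
  | .untl _ ψ, h => SatF.mono hST (φ := ψ) h
  | .rel _ ψ, h => SatF.mono hST (φ := ψ) h
  | .next ψ, h => SatF.mono hST (φ := ψ) h

theorem mem_DNF_and {φ₁ φ₂ ψ : LTL AP} {α : Set (Lit AP)} :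
    (α, ψ) ∈ DNF (.and φ₁ φ₂) ↔ ∃ α₁ ψ₁ α₂ ψ₂, (α₁, ψ₁) ∈ DNF φ₁ ∧ (α₂, ψ₂) ∈ DNF φ₂ ∧
      α = α₁ ∪ α₂ ∧ ψ = .and ψ₁ ψ₂ := by
  simp [DNF]

theorem mem_DNF_untl {φ₁ φ₂ ψ : LTL AP} {α : Set (Lit AP)} :
    (α, ψ) ∈ DNF (.untl φ₁ φ₂) ↔
      (α, ψ) ∈ DNF φ₂ ∨ ∃ ψ₁, (α, ψ₁) ∈ DNF φ₁ ∧ ψ = .and ψ₁ (.untl φ₁ φ₂) := by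
  simp [DNF]

theorem mem_DNF_rel {φ₁ φ₂ ψ : LTL AP} {α : Set (Lit AP)} :
    (α, ψ) ∈ DNF (.rel φ₁ φ₂) ↔
      (∃ α₁ ψ₁ α₂ ψ₂, (α₁, ψ₁) ∈ DNF φ₁ ∧ (α₂, ψ₂) ∈ DNF φ₂ ∧
        α = α₁ ∪ α₂ ∧ ψ = .and ψ₁ ψ₂) ∨
      ∃ ψ₂, (α, ψ₂) ∈ DNF φ₂ ∧ ψ = .and ψ₂ (.rel φ₁ φ₂) := by
  simp [DNF]

theorem satF_expand_general {AP : Type} (φ ψ : LTL AP) (α S : Set (Lit AP))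
    (h : (α, ψ) ∈ DNF φ) (hs : SatF S ψ) :
    SatF (S ∪ α) φ := by
  induction φ generalizing ψ α with
  | tt => trivial
  | atom _ | natom _ =>
    obtain ⟨rfl, -⟩ := Prod.mk.inj h
    exact Or.inr rfl
  | and _ _ ih₁ ih₂ =>
    obtain ⟨α₁, ψ₁, α₂, ψ₂, h₁, h₂, rfl, rfl⟩ := mem_DNF_and.1 h
    exact ⟨(ih₁ ψ₁ α₁ h₁ hs.1).mono (Set.union_subset_union_right S Set.subset_union_left),
      (ih₂ ψ₂ α₂ h₂ hs.2).mono (Set.union_subset_union_right S Set.subset_union_right)⟩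
  | or _ _ ih₁ ih₂ => exact h.imp (ih₁ ψ α · hs) (ih₂ ψ α · hs)
  | untl _ _ _ ih₂ =>
    obtain h₂ | ⟨_, -, rfl⟩ := mem_DNF_untl.1 h
    · exact ih₂ ψ α h₂ hs
    · exact hs.2.mono Set.subset_union_left
  | rel _ _ _ ih₂ =>
    obtain ⟨_, _, α₂, ψ₂, -, h₂, rfl, rfl⟩ | ⟨ψ₂, h₂, rfl⟩ := mem_DNF_rel.1 h
    · exact (ih₂ ψ₂ α₂ h₂ hs.2).mono (Set.union_subset_union_right S Set.subset_union_right)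
    · exact ih₂ ψ₂ α h₂ hs.1
  | next =>
    obtain ⟨rfl, rfl⟩ := Prod.mk.inj h
    exact hs.mono Set.subset_union_left

/-- if `α ∧ X ψ ∈ DNF(φ)` and `S ⊨_f ψ`, then `S ∪ CF(α) ⊨_f φ`
(here `α` is represented by its set of literals, so `CF(α) = α`). -/
theorem satF_expand {AP : Type} (φ ψ : LTL AP) (α S : Set (Lit AP))
    (hSfin : S.Finite) (h : (α, ψ) ∈ DNF φ) (hs : SatF S ψ) :
    SatF (S ∪ α) φ :=
  satF_expand_general φ ψ α S h hs

end DNFLTL
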